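/- arXiv:2511.11278 — 2 statements merged into one kernel-verified Lean document; each statement's English description precedes it below -/
import Mathlib

section
/- For n = 4 (N = {1,2,3,4}), there is no mechanism that simultaneously satisfies CE-efficiency, respecting improvement, and strategy-proofness. -/
/-- Each division has a strict linear (total) preference order over workers. -/
def StrictProfile {α : Type*} (pref : α → α → α → Prop) : Prop :=
  ∀ i, IsStrictTotalOrder α (pref i)

/-- `pref'` is an improvement for division `i` with respect to `pref`. -/
def Improvement {α : Type*} (pref pref' : α → α → α → Prop) (i : α) : Prop :=
  pref' i = pref i ∧
  (∀ j, j ≠ i → ∀ k, k ≠ i → pref j i k → pref' j i k) ∧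
  (∀ j, j ≠ i → ∀ k, k ≠ i → ∀ l, l ≠ i → (pref j k l ↔ pref' j k l))

/-- The assignment `μ` is a derangement that is CE-efficient at `pref`: `μ` has no
fixed point, and no derangement `μ'` weakly improves every division and strictly
improves some division. -/
def CEEfficientAt {α : Type*} (pref : α → α → α → Prop) (μ : Equiv.Perm α) : Prop :=
  (∀ i, μ i ≠ i) ∧
  ¬ ∃ μ' : Equiv.Perm α, (∀ i, μ' i ≠ i) ∧
      (∀ i, μ' i = μ i ∨ pref i (μ' i) (μ i)) ∧ (∃ j, pref j (μ' j) (μ j))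

def R (l : List (Fin 4)) (a b : Fin 4) : Prop := l.idxOf a < l.idxOf b
instance (l : List (Fin 4)) (a b : Fin 4) : Decidable (R l a b) :=
  inferInstanceAs (Decidable (_ < _))
def Pr (L : Fin 4 → List (Fin 4)) : Fin 4 → Fin 4 → Fin 4 → Prop := fun i => R (L i)
instance (L : Fin 4 → List (Fin 4)) (i j k : Fin 4) : Decidable (Pr L i j k) :=
  inferInstanceAs (Decidable (R (L i) j k))
instance (L : Fin 4 → List (Fin 4)) (μ : Equiv.Perm (Fin 4)) : Decidable (CEEfficientAt (Pr L) μ) :=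
  decidable_of_iff ((∀ i, μ i ≠ i) ∧
    ¬ ∃ μ' : Equiv.Perm (Fin 4), (∀ i, μ' i ≠ i) ∧
      (∀ i, μ' i = μ i ∨ Pr L i (μ' i) (μ i)) ∧ (∃ j, Pr L j (μ' j) (μ j))) Iff.rfl
theorem sto (l : List (Fin 4)) (h1 : ∀ a b : Fin 4, R l a b ∨ a = b ∨ R l b a)
    (h2 : ∀ a : Fin 4, ¬ R l a a) (h3 : ∀ a b c : Fin 4, R l a b → R l b c → R l a c) :
    IsStrictTotalOrder (Fin 4) (R l) :=
  { trichotomous := fun a b hab hba => (h1 a b).elim (fun h => absurd h hab) (fun h => h.elim id (fun h => absurd h hba)), irrefl := h2, trans := h3 }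
theorem strict (L : Fin 4 → List (Fin 4)) (h1 : ∀ i a b, Pr L i a b ∨ a = b ∨ Pr L i b a)
    (h2 : ∀ i a, ¬ Pr L i a a) (h3 : ∀ i a b c, Pr L i a b → Pr L i b c → Pr L i a c) :
    StrictProfile (Pr L) :=
  fun i => { trichotomous := fun a b hab hba => (h1 i a b).elim (fun h => absurd h hab) (fun h => h.elim id (fun h => absurd h hba)), irrefl := h2 i, trans := h3 i }
theorem upd (L : Fin 4 → List (Fin 4)) (i : Fin 4) (l' : List (Fin 4)) :
    Function.update (Pr L) i (R l') = Pr (Function.update L i l') := by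
  funext j
  by_cases h : j = i
  · subst h; simp [Pr]
  · simp [Pr, Function.update, h]
def pm (v w : Fin 4 → Fin 4) (h1 : Function.LeftInverse w v) (h2 : Function.RightInverse w v) :
    Equiv.Perm (Fin 4) := ⟨v, w, h1, h2⟩

def p1032 : Equiv.Perm (Fin 4) := pm ![1,0,3,2] ![1,0,3,2] (by decide) (by decide)
def p1230 : Equiv.Perm (Fin 4) := pm ![1,2,3,0] ![3,0,1,2] (by decide) (by decide)
def p1302 : Equiv.Perm (Fin 4) := pm ![1,3,0,2] ![2,0,3,1] (by decide) (by decide)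
def p2031 : Equiv.Perm (Fin 4) := pm ![2,0,3,1] ![1,3,0,2] (by decide) (by decide)
def p2301 : Equiv.Perm (Fin 4) := pm ![2,3,0,1] ![2,3,0,1] (by decide) (by decide)
def p2310 : Equiv.Perm (Fin 4) := pm ![2,3,1,0] ![3,2,0,1] (by decide) (by decide)
def p3012 : Equiv.Perm (Fin 4) := pm ![3,0,1,2] ![1,2,3,0] (by decide) (by decide)
def p3201 : Equiv.Perm (Fin 4) := pm ![3,2,0,1] ![2,3,1,0] (by decide) (by decide)
def p3210 : Equiv.Perm (Fin 4) := pm ![3,2,1,0] ![3,2,1,0] (by decide) (by decide)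
def L0 : Fin 4 → List (Fin 4) := ![[0,1,2,3],[0,1,3,2],[0,1,2,3],[0,2,1,3]]
def L1 : Fin 4 → List (Fin 4) := ![[0,1,2,3],[0,1,3,2],[1,2,3,0],[0,2,1,3]]
def L2 : Fin 4 → List (Fin 4) := ![[0,1,2,3],[1,2,3,0],[0,3,1,2],[0,1,2,3]]
def L3 : Fin 4 → List (Fin 4) := ![[0,1,2,3],[1,2,3,0],[1,2,3,0],[0,1,2,3]]
def L4 : Fin 4 → List (Fin 4) := ![[0,1,2,3],[1,2,3,0],[3,0,1,2],[0,1,2,3]]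
def L5 : Fin 4 → List (Fin 4) := ![[0,1,2,3],[1,3,0,2],[0,1,2,3],[0,2,1,3]]
def L6 : Fin 4 → List (Fin 4) := ![[0,1,2,3],[1,3,0,2],[0,1,2,3],[2,0,1,3]]
def L7 : Fin 4 → List (Fin 4) := ![[0,1,2,3],[1,3,0,2],[1,2,3,0],[0,2,1,3]]
def L8 : Fin 4 → List (Fin 4) := ![[0,1,2,3],[1,3,2,0],[0,1,2,3],[0,2,1,3]]
def L9 : Fin 4 → List (Fin 4) := ![[0,1,2,3],[1,3,2,0],[1,2,3,0],[0,1,2,3]]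
def L10 : Fin 4 → List (Fin 4) := ![[0,1,2,3],[1,3,2,0],[1,2,3,0],[0,2,1,3]]
def L11 : Fin 4 → List (Fin 4) := ![[0,1,2,3],[1,3,2,0],[2,0,1,3],[0,2,1,3]]
def L12 : Fin 4 → List (Fin 4) := ![[0,1,3,2],[0,1,2,3],[0,3,1,2],[0,1,2,3]]
def L13 : Fin 4 → List (Fin 4) := ![[0,1,3,2],[1,2,0,3],[0,3,1,2],[0,1,2,3]]
def L14 : Fin 4 → List (Fin 4) := ![[0,1,3,2],[1,2,3,0],[0,3,1,2],[0,1,2,3]]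
def L15 : Fin 4 → List (Fin 4) := ![[0,1,3,2],[1,3,2,0],[0,3,1,2],[0,1,2,3]]
def L16 : Fin 4 → List (Fin 4) := ![[0,1,3,2],[1,3,2,0],[0,3,1,2],[0,2,1,3]]
def L17 : Fin 4 → List (Fin 4) := ![[0,1,3,2],[1,3,2,0],[1,2,3,0],[0,2,1,3]]
def L18 : Fin 4 → List (Fin 4) := ![[0,1,3,2],[1,3,2,0],[2,0,1,3],[0,2,1,3]]
def L19 : Fin 4 → List (Fin 4) := ![[0,2,1,3],[0,1,3,2],[0,1,2,3],[0,2,1,3]]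
def L20 : Fin 4 → List (Fin 4) := ![[0,2,1,3],[0,1,3,2],[1,2,3,0],[0,2,1,3]]
def L21 : Fin 4 → List (Fin 4) := ![[0,2,1,3],[1,3,0,2],[1,2,3,0],[0,2,1,3]]
def L22 : Fin 4 → List (Fin 4) := ![[0,3,1,2],[0,1,2,3],[0,3,1,2],[0,1,2,3]]

set_option maxHeartbeats 4000000 in
/-- For `n = 4`, no mechanism simultaneously satisfies CE-efficiency, respecting
improvement and strategy-proofness. -/
theorem n4_no_CEE_RI_SP :
    ¬ ∃ f : (Fin 4 → Fin 4 → Fin 4 → Prop) → Equiv.Perm (Fin 4),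
      (∀ pref, StrictProfile pref → CEEfficientAt pref (f pref)) ∧
      (∀ pref pref' (i : Fin 4), StrictProfile pref → StrictProfile pref' →
        Improvement pref pref' i →
        (f pref' i = f pref i ∨ pref i (f pref' i) (f pref i))) ∧
      (∀ pref (i : Fin 4) (q : Fin 4 → Fin 4 → Prop), StrictProfile pref →
        IsStrictTotalOrder (Fin 4) q →
        (f pref i = f (Function.update pref i q) i ∨
          pref i (f pref i) (f (Function.update pref i q) i))) := by
  rintro ⟨f, hCE, hRI, hSP⟩
  have s0 : StrictProfile (Pr L0) := strict L0 (by decide) (by decide) (by decide)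
  have s1 : StrictProfile (Pr L1) := strict L1 (by decide) (by decide) (by decide)
  have s2 : StrictProfile (Pr L2) := strict L2 (by decide) (by decide) (by decide)
  have s3 : StrictProfile (Pr L3) := strict L3 (by decide) (by decide) (by decide)
  have s4 : StrictProfile (Pr L4) := strict L4 (by decide) (by decide) (by decide)
  have s5 : StrictProfile (Pr L5) := strict L5 (by decide) (by decide) (by decide)
  have s6 : StrictProfile (Pr L6) := strict L6 (by decide) (by decide) (by decide)
  have s7 : StrictProfile (Pr L7) := strict L7 (by decide) (by decide) (by decide)
  have s8 : StrictProfile (Pr L8) := strict L8 (by decide) (by decide) (by decide)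
  have s9 : StrictProfile (Pr L9) := strict L9 (by decide) (by decide) (by decide)
  have s10 : StrictProfile (Pr L10) := strict L10 (by decide) (by decide) (by decide)
  have s11 : StrictProfile (Pr L11) := strict L11 (by decide) (by decide) (by decide)
  have s12 : StrictProfile (Pr L12) := strict L12 (by decide) (by decide) (by decide)
  have s13 : StrictProfile (Pr L13) := strict L13 (by decide) (by decide) (by decide)
  have s14 : StrictProfile (Pr L14) := strict L14 (by decide) (by decide) (by decide)
  have s15 : StrictProfile (Pr L15) := strict L15 (by decide) (by decide) (by decide)
  have s16 : StrictProfile (Pr L16) := strict L16 (by decide) (by decide) (by decide)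
  have s17 : StrictProfile (Pr L17) := strict L17 (by decide) (by decide) (by decide)
  have s18 : StrictProfile (Pr L18) := strict L18 (by decide) (by decide) (by decide)
  have s19 : StrictProfile (Pr L19) := strict L19 (by decide) (by decide) (by decide)
  have s20 : StrictProfile (Pr L20) := strict L20 (by decide) (by decide) (by decide)
  have s21 : StrictProfile (Pr L21) := strict L21 (by decide) (by decide) (by decide)
  have s22 : StrictProfile (Pr L22) := strict L22 (by decide) (by decide) (by decide)
  have h0 : f (Pr L0) = p1032 ∨ f (Pr L0) = p1230 ∨ f (Pr L0) = p1302 ∨ f (Pr L0) = p2310 ∨ f (Pr L0) = p3012 := (by decide : ∀ μ : Equiv.Perm (Fin 4), CEEfficientAt (Pr L0) μ → μ = p1032 ∨ μ = p1230 ∨ μ = p1302 ∨ μ = p2310 ∨ μ = p3012) _ (hCE (Pr L0) s0)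
  have h1 : f (Pr L1) = p1032 ∨ f (Pr L1) = p1230 ∨ f (Pr L1) = p2310 ∨ f (Pr L1) = p3012 := (by decide : ∀ μ : Equiv.Perm (Fin 4), CEEfficientAt (Pr L1) μ → μ = p1032 ∨ μ = p1230 ∨ μ = p2310 ∨ μ = p3012) _ (hCE (Pr L1) s1)
  have h2 : f (Pr L2) = p1230 ∨ f (Pr L2) = p1302 ∨ f (Pr L2) = p2301 ∨ f (Pr L2) = p3201 := (by decide : ∀ μ : Equiv.Perm (Fin 4), CEEfficientAt (Pr L2) μ → μ = p1230 ∨ μ = p1302 ∨ μ = p2301 ∨ μ = p3201) _ (hCE (Pr L2) s2)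
  have h3 : f (Pr L3) = p1230 ∨ f (Pr L3) = p2310 ∨ f (Pr L3) = p3210 := (by decide : ∀ μ : Equiv.Perm (Fin 4), CEEfficientAt (Pr L3) μ → μ = p1230 ∨ μ = p2310 ∨ μ = p3210) _ (hCE (Pr L3) s3)
  have h4 : f (Pr L4) = p1230 := (by decide : ∀ μ : Equiv.Perm (Fin 4), CEEfficientAt (Pr L4) μ → μ = p1230) _ (hCE (Pr L4) s4)
  have h5 : f (Pr L5) = p1230 ∨ f (Pr L5) = p1302 ∨ f (Pr L5) = p2310 := (by decide : ∀ μ : Equiv.Perm (Fin 4), CEEfficientAt (Pr L5) μ → μ = p1230 ∨ μ = p1302 ∨ μ = p2310) _ (hCE (Pr L5) s5)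
  have h6 : f (Pr L6) = p1302 := (by decide : ∀ μ : Equiv.Perm (Fin 4), CEEfficientAt (Pr L6) μ → μ = p1302) _ (hCE (Pr L6) s6)
  have h7 : f (Pr L7) = p1032 ∨ f (Pr L7) = p1230 ∨ f (Pr L7) = p1302 ∨ f (Pr L7) = p2310 := (by decide : ∀ μ : Equiv.Perm (Fin 4), CEEfficientAt (Pr L7) μ → μ = p1032 ∨ μ = p1230 ∨ μ = p1302 ∨ μ = p2310) _ (hCE (Pr L7) s7)
  have h8 : f (Pr L8) = p1230 ∨ f (Pr L8) = p1302 ∨ f (Pr L8) = p2310 := (by decide : ∀ μ : Equiv.Perm (Fin 4), CEEfficientAt (Pr L8) μ → μ = p1230 ∨ μ = p1302 ∨ μ = p2310) _ (hCE (Pr L8) s8)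
  have h9 : f (Pr L9) = p1230 ∨ f (Pr L9) = p1302 ∨ f (Pr L9) = p2310 := (by decide : ∀ μ : Equiv.Perm (Fin 4), CEEfficientAt (Pr L9) μ → μ = p1230 ∨ μ = p1302 ∨ μ = p2310) _ (hCE (Pr L9) s9)
  have h10 : f (Pr L10) = p1230 ∨ f (Pr L10) = p1302 ∨ f (Pr L10) = p2310 := (by decide : ∀ μ : Equiv.Perm (Fin 4), CEEfficientAt (Pr L10) μ → μ = p1230 ∨ μ = p1302 ∨ μ = p2310) _ (hCE (Pr L10) s10)
  have h11 : f (Pr L11) = p1230 ∨ f (Pr L11) = p1302 ∨ f (Pr L11) = p2310 := (by decide : ∀ μ : Equiv.Perm (Fin 4), CEEfficientAt (Pr L11) μ → μ = p1230 ∨ μ = p1302 ∨ μ = p2310) _ (hCE (Pr L11) s11)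
  have h12 : f (Pr L12) = p1032 ∨ f (Pr L12) = p1230 ∨ f (Pr L12) = p1302 ∨ f (Pr L12) = p2031 ∨ f (Pr L12) = p3201 := (by decide : ∀ μ : Equiv.Perm (Fin 4), CEEfficientAt (Pr L12) μ → μ = p1032 ∨ μ = p1230 ∨ μ = p1302 ∨ μ = p2031 ∨ μ = p3201) _ (hCE (Pr L12) s12)
  have h13 : f (Pr L13) = p1230 ∨ f (Pr L13) = p1302 ∨ f (Pr L13) = p3201 := (by decide : ∀ μ : Equiv.Perm (Fin 4), CEEfficientAt (Pr L13) μ → μ = p1230 ∨ μ = p1302 ∨ μ = p3201) _ (hCE (Pr L13) s13)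
  have h14 : f (Pr L14) = p1230 ∨ f (Pr L14) = p1302 ∨ f (Pr L14) = p3201 := (by decide : ∀ μ : Equiv.Perm (Fin 4), CEEfficientAt (Pr L14) μ → μ = p1230 ∨ μ = p1302 ∨ μ = p3201) _ (hCE (Pr L14) s14)
  have h15 : f (Pr L15) = p1230 ∨ f (Pr L15) = p1302 ∨ f (Pr L15) = p2301 ∨ f (Pr L15) = p2310 ∨ f (Pr L15) = p3201 := (by decide : ∀ μ : Equiv.Perm (Fin 4), CEEfficientAt (Pr L15) μ → μ = p1230 ∨ μ = p1302 ∨ μ = p2301 ∨ μ = p2310 ∨ μ = p3201) _ (hCE (Pr L15) s15)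
  have h16 : f (Pr L16) = p1230 ∨ f (Pr L16) = p1302 ∨ f (Pr L16) = p2310 := (by decide : ∀ μ : Equiv.Perm (Fin 4), CEEfficientAt (Pr L16) μ → μ = p1230 ∨ μ = p1302 ∨ μ = p2310) _ (hCE (Pr L16) s16)
  have h17 : f (Pr L17) = p1230 ∨ f (Pr L17) = p1302 ∨ f (Pr L17) = p2310 ∨ f (Pr L17) = p3210 := (by decide : ∀ μ : Equiv.Perm (Fin 4), CEEfficientAt (Pr L17) μ → μ = p1230 ∨ μ = p1302 ∨ μ = p2310 ∨ μ = p3210) _ (hCE (Pr L17) s17)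
  have h18 : f (Pr L18) = p1230 ∨ f (Pr L18) = p1302 ∨ f (Pr L18) = p2310 ∨ f (Pr L18) = p3210 := (by decide : ∀ μ : Equiv.Perm (Fin 4), CEEfficientAt (Pr L18) μ → μ = p1230 ∨ μ = p1302 ∨ μ = p2310 ∨ μ = p3210) _ (hCE (Pr L18) s18)
  have h19 : f (Pr L19) = p1032 ∨ f (Pr L19) = p1302 ∨ f (Pr L19) = p2031 ∨ f (Pr L19) = p2301 ∨ f (Pr L19) = p2310 ∨ f (Pr L19) = p3012 := (by decide : ∀ μ : Equiv.Perm (Fin 4), CEEfficientAt (Pr L19) μ → μ = p1032 ∨ μ = p1302 ∨ μ = p2031 ∨ μ = p2301 ∨ μ = p2310 ∨ μ = p3012) _ (hCE (Pr L19) s19)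
  have h20 : f (Pr L20) = p1032 ∨ f (Pr L20) = p2031 ∨ f (Pr L20) = p2310 ∨ f (Pr L20) = p3012 := (by decide : ∀ μ : Equiv.Perm (Fin 4), CEEfficientAt (Pr L20) μ → μ = p1032 ∨ μ = p2031 ∨ μ = p2310 ∨ μ = p3012) _ (hCE (Pr L20) s20)
  have h21 : f (Pr L21) = p2310 := (by decide : ∀ μ : Equiv.Perm (Fin 4), CEEfficientAt (Pr L21) μ → μ = p2310) _ (hCE (Pr L21) s21)
  have h22 : f (Pr L22) = p1032 ∨ f (Pr L22) = p1230 ∨ f (Pr L22) = p2031 ∨ f (Pr L22) = p3012 ∨ f (Pr L22) = p3201 ∨ f (Pr L22) = p3210 := (by decide : ∀ μ : Equiv.Perm (Fin 4), CEEfficientAt (Pr L22) μ → μ = p1032 ∨ μ = p1230 ∨ μ = p2031 ∨ μ = p3012 ∨ μ = p3201 ∨ μ = p3210) _ (hCE (Pr L22) s22)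
  have c0 : f (Pr L0) (1 : Fin 4) = f (Pr L19) (1 : Fin 4) ∨ Pr L19 (1 : Fin 4) (f (Pr L0) (1 : Fin 4)) (f (Pr L19) (1 : Fin 4)) := hRI (Pr L19) (Pr L0) (1 : Fin 4) s19 s0 ⟨rfl, by decide, by decide⟩
  have c1 : f (Pr L1) (1 : Fin 4) = f (Pr L20) (1 : Fin 4) ∨ Pr L20 (1 : Fin 4) (f (Pr L1) (1 : Fin 4)) (f (Pr L20) (1 : Fin 4)) := hRI (Pr L20) (Pr L1) (1 : Fin 4) s20 s1 ⟨rfl, by decide, by decide⟩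
  have c2 : f (Pr L2) (0 : Fin 4) = f (Pr L4) (0 : Fin 4) ∨ Pr L4 (0 : Fin 4) (f (Pr L2) (0 : Fin 4)) (f (Pr L4) (0 : Fin 4)) := hRI (Pr L4) (Pr L2) (0 : Fin 4) s4 s2 ⟨rfl, by decide, by decide⟩
  have c3a : f (Pr L5) (1 : Fin 4) = f (Pr L0) (1 : Fin 4) ∨ Pr L5 (1 : Fin 4) (f (Pr L5) (1 : Fin 4)) (f (Pr L0) (1 : Fin 4)) := by
    have h := hSP (Pr L5) (1 : Fin 4) (R ([0,1,3,2] : List (Fin 4))) s5 (sto _ (by decide) (by decide) (by decide))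
    rwa [upd, show Function.update L5 (1 : Fin 4) ([0,1,3,2] : List (Fin 4)) = L0 from by funext j; fin_cases j <;> rfl] at h
  have c3b : f (Pr L0) (1 : Fin 4) = f (Pr L5) (1 : Fin 4) ∨ Pr L0 (1 : Fin 4) (f (Pr L0) (1 : Fin 4)) (f (Pr L5) (1 : Fin 4)) := by
    have h := hSP (Pr L0) (1 : Fin 4) (R ([1,3,0,2] : List (Fin 4))) s0 (sto _ (by decide) (by decide) (by decide))
    rwa [upd, show Function.update L0 (1 : Fin 4) ([1,3,0,2] : List (Fin 4)) = L5 from by funext j; fin_cases j <;> rfl] at h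
  have c4 : f (Pr L5) (0 : Fin 4) = f (Pr L6) (0 : Fin 4) ∨ Pr L6 (0 : Fin 4) (f (Pr L5) (0 : Fin 4)) (f (Pr L6) (0 : Fin 4)) := hRI (Pr L6) (Pr L5) (0 : Fin 4) s6 s5 ⟨rfl, by decide, by decide⟩
  have c5a : f (Pr L7) (1 : Fin 4) = f (Pr L1) (1 : Fin 4) ∨ Pr L7 (1 : Fin 4) (f (Pr L7) (1 : Fin 4)) (f (Pr L1) (1 : Fin 4)) := by
    have h := hSP (Pr L7) (1 : Fin 4) (R ([0,1,3,2] : List (Fin 4))) s7 (sto _ (by decide) (by decide) (by decide))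
    rwa [upd, show Function.update L7 (1 : Fin 4) ([0,1,3,2] : List (Fin 4)) = L1 from by funext j; fin_cases j <;> rfl] at h
  have c5b : f (Pr L1) (1 : Fin 4) = f (Pr L7) (1 : Fin 4) ∨ Pr L1 (1 : Fin 4) (f (Pr L1) (1 : Fin 4)) (f (Pr L7) (1 : Fin 4)) := by
    have h := hSP (Pr L1) (1 : Fin 4) (R ([1,3,0,2] : List (Fin 4))) s1 (sto _ (by decide) (by decide) (by decide))
    rwa [upd, show Function.update L1 (1 : Fin 4) ([1,3,0,2] : List (Fin 4)) = L7 from by funext j; fin_cases j <;> rfl] at h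
  have c6 : f (Pr L7) (1 : Fin 4) = f (Pr L21) (1 : Fin 4) ∨ Pr L21 (1 : Fin 4) (f (Pr L7) (1 : Fin 4)) (f (Pr L21) (1 : Fin 4)) := hRI (Pr L21) (Pr L7) (1 : Fin 4) s21 s7 ⟨rfl, by decide, by decide⟩
  have c7 : f (Pr L8) (2 : Fin 4) = f (Pr L5) (2 : Fin 4) ∨ Pr L5 (2 : Fin 4) (f (Pr L8) (2 : Fin 4)) (f (Pr L5) (2 : Fin 4)) := hRI (Pr L5) (Pr L8) (2 : Fin 4) s5 s8 ⟨rfl, by decide, by decide⟩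
  have c8 : f (Pr L9) (3 : Fin 4) = f (Pr L3) (3 : Fin 4) ∨ Pr L3 (3 : Fin 4) (f (Pr L9) (3 : Fin 4)) (f (Pr L3) (3 : Fin 4)) := hRI (Pr L3) (Pr L9) (3 : Fin 4) s3 s9 ⟨rfl, by decide, by decide⟩
  have c9a : f (Pr L10) (1 : Fin 4) = f (Pr L7) (1 : Fin 4) ∨ Pr L10 (1 : Fin 4) (f (Pr L10) (1 : Fin 4)) (f (Pr L7) (1 : Fin 4)) := by
    have h := hSP (Pr L10) (1 : Fin 4) (R ([1,3,0,2] : List (Fin 4))) s10 (sto _ (by decide) (by decide) (by decide))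
    rwa [upd, show Function.update L10 (1 : Fin 4) ([1,3,0,2] : List (Fin 4)) = L7 from by funext j; fin_cases j <;> rfl] at h
  have c9b : f (Pr L7) (1 : Fin 4) = f (Pr L10) (1 : Fin 4) ∨ Pr L7 (1 : Fin 4) (f (Pr L7) (1 : Fin 4)) (f (Pr L10) (1 : Fin 4)) := by
    have h := hSP (Pr L7) (1 : Fin 4) (R ([1,3,2,0] : List (Fin 4))) s7 (sto _ (by decide) (by decide) (by decide))
    rwa [upd, show Function.update L7 (1 : Fin 4) ([1,3,2,0] : List (Fin 4)) = L10 from by funext j; fin_cases j <;> rfl] at h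
  have c10a : f (Pr L10) (3 : Fin 4) = f (Pr L9) (3 : Fin 4) ∨ Pr L10 (3 : Fin 4) (f (Pr L10) (3 : Fin 4)) (f (Pr L9) (3 : Fin 4)) := by
    have h := hSP (Pr L10) (3 : Fin 4) (R ([0,1,2,3] : List (Fin 4))) s10 (sto _ (by decide) (by decide) (by decide))
    rwa [upd, show Function.update L10 (3 : Fin 4) ([0,1,2,3] : List (Fin 4)) = L9 from by funext j; fin_cases j <;> rfl] at h
  have c10b : f (Pr L9) (3 : Fin 4) = f (Pr L10) (3 : Fin 4) ∨ Pr L9 (3 : Fin 4) (f (Pr L9) (3 : Fin 4)) (f (Pr L10) (3 : Fin 4)) := by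
    have h := hSP (Pr L9) (3 : Fin 4) (R ([0,2,1,3] : List (Fin 4))) s9 (sto _ (by decide) (by decide) (by decide))
    rwa [upd, show Function.update L9 (3 : Fin 4) ([0,2,1,3] : List (Fin 4)) = L10 from by funext j; fin_cases j <;> rfl] at h
  have c11a : f (Pr L11) (2 : Fin 4) = f (Pr L8) (2 : Fin 4) ∨ Pr L11 (2 : Fin 4) (f (Pr L11) (2 : Fin 4)) (f (Pr L8) (2 : Fin 4)) := by
    have h := hSP (Pr L11) (2 : Fin 4) (R ([0,1,2,3] : List (Fin 4))) s11 (sto _ (by decide) (by decide) (by decide))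
    rwa [upd, show Function.update L11 (2 : Fin 4) ([0,1,2,3] : List (Fin 4)) = L8 from by funext j; fin_cases j <;> rfl] at h
  have c11b : f (Pr L8) (2 : Fin 4) = f (Pr L11) (2 : Fin 4) ∨ Pr L8 (2 : Fin 4) (f (Pr L8) (2 : Fin 4)) (f (Pr L11) (2 : Fin 4)) := by
    have h := hSP (Pr L8) (2 : Fin 4) (R ([2,0,1,3] : List (Fin 4))) s8 (sto _ (by decide) (by decide) (by decide))
    rwa [upd, show Function.update L8 (2 : Fin 4) ([2,0,1,3] : List (Fin 4)) = L11 from by funext j; fin_cases j <;> rfl] at h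
  have c12 : f (Pr L12) (1 : Fin 4) = f (Pr L22) (1 : Fin 4) ∨ Pr L22 (1 : Fin 4) (f (Pr L12) (1 : Fin 4)) (f (Pr L22) (1 : Fin 4)) := hRI (Pr L22) (Pr L12) (1 : Fin 4) s22 s12 ⟨rfl, by decide, by decide⟩
  have c13a : f (Pr L13) (1 : Fin 4) = f (Pr L12) (1 : Fin 4) ∨ Pr L13 (1 : Fin 4) (f (Pr L13) (1 : Fin 4)) (f (Pr L12) (1 : Fin 4)) := by
    have h := hSP (Pr L13) (1 : Fin 4) (R ([0,1,2,3] : List (Fin 4))) s13 (sto _ (by decide) (by decide) (by decide))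
    rwa [upd, show Function.update L13 (1 : Fin 4) ([0,1,2,3] : List (Fin 4)) = L12 from by funext j; fin_cases j <;> rfl] at h
  have c13b : f (Pr L12) (1 : Fin 4) = f (Pr L13) (1 : Fin 4) ∨ Pr L12 (1 : Fin 4) (f (Pr L12) (1 : Fin 4)) (f (Pr L13) (1 : Fin 4)) := by
    have h := hSP (Pr L12) (1 : Fin 4) (R ([1,2,0,3] : List (Fin 4))) s12 (sto _ (by decide) (by decide) (by decide))
    rwa [upd, show Function.update L12 (1 : Fin 4) ([1,2,0,3] : List (Fin 4)) = L13 from by funext j; fin_cases j <;> rfl] at h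
  have c14a : f (Pr L14) (1 : Fin 4) = f (Pr L13) (1 : Fin 4) ∨ Pr L14 (1 : Fin 4) (f (Pr L14) (1 : Fin 4)) (f (Pr L13) (1 : Fin 4)) := by
    have h := hSP (Pr L14) (1 : Fin 4) (R ([1,2,0,3] : List (Fin 4))) s14 (sto _ (by decide) (by decide) (by decide))
    rwa [upd, show Function.update L14 (1 : Fin 4) ([1,2,0,3] : List (Fin 4)) = L13 from by funext j; fin_cases j <;> rfl] at h
  have c14b : f (Pr L13) (1 : Fin 4) = f (Pr L14) (1 : Fin 4) ∨ Pr L13 (1 : Fin 4) (f (Pr L13) (1 : Fin 4)) (f (Pr L14) (1 : Fin 4)) := by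
    have h := hSP (Pr L13) (1 : Fin 4) (R ([1,2,3,0] : List (Fin 4))) s13 (sto _ (by decide) (by decide) (by decide))
    rwa [upd, show Function.update L13 (1 : Fin 4) ([1,2,3,0] : List (Fin 4)) = L14 from by funext j; fin_cases j <;> rfl] at h
  have c15a : f (Pr L14) (0 : Fin 4) = f (Pr L2) (0 : Fin 4) ∨ Pr L14 (0 : Fin 4) (f (Pr L14) (0 : Fin 4)) (f (Pr L2) (0 : Fin 4)) := by
    have h := hSP (Pr L14) (0 : Fin 4) (R ([0,1,2,3] : List (Fin 4))) s14 (sto _ (by decide) (by decide) (by decide))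
    rwa [upd, show Function.update L14 (0 : Fin 4) ([0,1,2,3] : List (Fin 4)) = L2 from by funext j; fin_cases j <;> rfl] at h
  have c15b : f (Pr L2) (0 : Fin 4) = f (Pr L14) (0 : Fin 4) ∨ Pr L2 (0 : Fin 4) (f (Pr L2) (0 : Fin 4)) (f (Pr L14) (0 : Fin 4)) := by
    have h := hSP (Pr L2) (0 : Fin 4) (R ([0,1,3,2] : List (Fin 4))) s2 (sto _ (by decide) (by decide) (by decide))
    rwa [upd, show Function.update L2 (0 : Fin 4) ([0,1,3,2] : List (Fin 4)) = L14 from by funext j; fin_cases j <;> rfl] at h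
  have c16 : f (Pr L14) (2 : Fin 4) = f (Pr L15) (2 : Fin 4) ∨ Pr L15 (2 : Fin 4) (f (Pr L14) (2 : Fin 4)) (f (Pr L15) (2 : Fin 4)) := hRI (Pr L15) (Pr L14) (2 : Fin 4) s15 s14 ⟨rfl, by decide, by decide⟩
  have c17a : f (Pr L16) (3 : Fin 4) = f (Pr L15) (3 : Fin 4) ∨ Pr L16 (3 : Fin 4) (f (Pr L16) (3 : Fin 4)) (f (Pr L15) (3 : Fin 4)) := by
    have h := hSP (Pr L16) (3 : Fin 4) (R ([0,1,2,3] : List (Fin 4))) s16 (sto _ (by decide) (by decide) (by decide))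
    rwa [upd, show Function.update L16 (3 : Fin 4) ([0,1,2,3] : List (Fin 4)) = L15 from by funext j; fin_cases j <;> rfl] at h
  have c17b : f (Pr L15) (3 : Fin 4) = f (Pr L16) (3 : Fin 4) ∨ Pr L15 (3 : Fin 4) (f (Pr L15) (3 : Fin 4)) (f (Pr L16) (3 : Fin 4)) := by
    have h := hSP (Pr L15) (3 : Fin 4) (R ([0,2,1,3] : List (Fin 4))) s15 (sto _ (by decide) (by decide) (by decide))
    rwa [upd, show Function.update L15 (3 : Fin 4) ([0,2,1,3] : List (Fin 4)) = L16 from by funext j; fin_cases j <;> rfl] at h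
  have c18a : f (Pr L17) (0 : Fin 4) = f (Pr L10) (0 : Fin 4) ∨ Pr L17 (0 : Fin 4) (f (Pr L17) (0 : Fin 4)) (f (Pr L10) (0 : Fin 4)) := by
    have h := hSP (Pr L17) (0 : Fin 4) (R ([0,1,2,3] : List (Fin 4))) s17 (sto _ (by decide) (by decide) (by decide))
    rwa [upd, show Function.update L17 (0 : Fin 4) ([0,1,2,3] : List (Fin 4)) = L10 from by funext j; fin_cases j <;> rfl] at h
  have c18b : f (Pr L10) (0 : Fin 4) = f (Pr L17) (0 : Fin 4) ∨ Pr L10 (0 : Fin 4) (f (Pr L10) (0 : Fin 4)) (f (Pr L17) (0 : Fin 4)) := by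
    have h := hSP (Pr L10) (0 : Fin 4) (R ([0,1,3,2] : List (Fin 4))) s10 (sto _ (by decide) (by decide) (by decide))
    rwa [upd, show Function.update L10 (0 : Fin 4) ([0,1,3,2] : List (Fin 4)) = L17 from by funext j; fin_cases j <;> rfl] at h
  have c19a : f (Pr L18) (0 : Fin 4) = f (Pr L11) (0 : Fin 4) ∨ Pr L18 (0 : Fin 4) (f (Pr L18) (0 : Fin 4)) (f (Pr L11) (0 : Fin 4)) := by
    have h := hSP (Pr L18) (0 : Fin 4) (R ([0,1,2,3] : List (Fin 4))) s18 (sto _ (by decide) (by decide) (by decide))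
    rwa [upd, show Function.update L18 (0 : Fin 4) ([0,1,2,3] : List (Fin 4)) = L11 from by funext j; fin_cases j <;> rfl] at h
  have c19b : f (Pr L11) (0 : Fin 4) = f (Pr L18) (0 : Fin 4) ∨ Pr L11 (0 : Fin 4) (f (Pr L11) (0 : Fin 4)) (f (Pr L18) (0 : Fin 4)) := by
    have h := hSP (Pr L11) (0 : Fin 4) (R ([0,1,3,2] : List (Fin 4))) s11 (sto _ (by decide) (by decide) (by decide))
    rwa [upd, show Function.update L11 (0 : Fin 4) ([0,1,3,2] : List (Fin 4)) = L18 from by funext j; fin_cases j <;> rfl] at h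
  have c20a : f (Pr L18) (2 : Fin 4) = f (Pr L17) (2 : Fin 4) ∨ Pr L18 (2 : Fin 4) (f (Pr L18) (2 : Fin 4)) (f (Pr L17) (2 : Fin 4)) := by
    have h := hSP (Pr L18) (2 : Fin 4) (R ([1,2,3,0] : List (Fin 4))) s18 (sto _ (by decide) (by decide) (by decide))
    rwa [upd, show Function.update L18 (2 : Fin 4) ([1,2,3,0] : List (Fin 4)) = L17 from by funext j; fin_cases j <;> rfl] at h
  have c20b : f (Pr L17) (2 : Fin 4) = f (Pr L18) (2 : Fin 4) ∨ Pr L17 (2 : Fin 4) (f (Pr L17) (2 : Fin 4)) (f (Pr L18) (2 : Fin 4)) := by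
    have h := hSP (Pr L17) (2 : Fin 4) (R ([2,0,1,3] : List (Fin 4))) s17 (sto _ (by decide) (by decide) (by decide))
    rwa [upd, show Function.update L17 (2 : Fin 4) ([2,0,1,3] : List (Fin 4)) = L18 from by funext j; fin_cases j <;> rfl] at h
  have c21a : f (Pr L18) (2 : Fin 4) = f (Pr L16) (2 : Fin 4) ∨ Pr L18 (2 : Fin 4) (f (Pr L18) (2 : Fin 4)) (f (Pr L16) (2 : Fin 4)) := by
    have h := hSP (Pr L18) (2 : Fin 4) (R ([0,3,1,2] : List (Fin 4))) s18 (sto _ (by decide) (by decide) (by decide))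
    rwa [upd, show Function.update L18 (2 : Fin 4) ([0,3,1,2] : List (Fin 4)) = L16 from by funext j; fin_cases j <;> rfl] at h
  have c21b : f (Pr L16) (2 : Fin 4) = f (Pr L18) (2 : Fin 4) ∨ Pr L16 (2 : Fin 4) (f (Pr L16) (2 : Fin 4)) (f (Pr L18) (2 : Fin 4)) := by
    have h := hSP (Pr L16) (2 : Fin 4) (R ([2,0,1,3] : List (Fin 4))) s16 (sto _ (by decide) (by decide) (by decide))
    rwa [upd, show Function.update L16 (2 : Fin 4) ([2,0,1,3] : List (Fin 4)) = L18 from by funext j; fin_cases j <;> rfl] at h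
  have e1 : f (Pr L0) = p1032 ∨ f (Pr L0) = p1302 ∨ f (Pr L0) = p2310 ∨ f (Pr L0) = p3012 := by
    rcases h0 with h|h|h|h|h
    · exact Or.inl h
    · exfalso
      rcases h19 with h'|h'|h'|h'|h'|h' <;> rw [h] at c0 <;> rw [h'] at c0 <;> revert c0 <;> decide
    · exact Or.inr (Or.inl h)
    · exact Or.inr (Or.inr (Or.inl h))
    · exact Or.inr (Or.inr (Or.inr (h)))
  have e2 : f (Pr L1) = p1032 ∨ f (Pr L1) = p2310 ∨ f (Pr L1) = p3012 := by
    rcases h1 with h|h|h|h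
    · exact Or.inl h
    · exfalso
      rcases h20 with h'|h'|h'|h' <;> rw [h] at c1 <;> rw [h'] at c1 <;> revert c1 <;> decide
    · exact Or.inr (Or.inl h)
    · exact Or.inr (Or.inr (h))
  have e3 : f (Pr L2) = p1230 ∨ f (Pr L2) = p1302 ∨ f (Pr L2) = p3201 := by
    rcases h2 with h|h|h|h
    · exact Or.inl h
    · exact Or.inr (Or.inl h)
    · exfalso
      rw [h] at c2 <;> rw [h4] at c2 <;> revert c2 <;> decide
    · exact Or.inr (Or.inr (h))
  have e4 : f (Pr L2) = p1230 ∨ f (Pr L2) = p1302 := by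
    rcases e3 with h|h|h
    · exact Or.inl h
    · exact Or.inr (h)
    · exfalso
      rw [h] at c2 <;> rw [h4] at c2 <;> revert c2 <;> decide
  have e5 : f (Pr L5) = p1302 ∨ f (Pr L5) = p2310 := by
    rcases h5 with h|h|h
    · exfalso
      rcases e1 with h'|h'|h'|h' <;> rw [h] at c3a c3b <;> rw [h'] at c3a c3b <;> revert c3a c3b <;> decide
    · exact Or.inl h
    · exact Or.inr (h)
  have e6 : f (Pr L5) = p1302 := by
    rcases e5 with h|h
    · exact h
    · exfalso
      rw [h] at c4 <;> rw [h6] at c4 <;> revert c4 <;> decide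
  have e7 : f (Pr L7) = p1032 ∨ f (Pr L7) = p1302 ∨ f (Pr L7) = p2310 := by
    rcases h7 with h|h|h|h
    · exact Or.inl h
    · exfalso
      rcases e2 with h'|h'|h' <;> rw [h] at c5a c5b <;> rw [h'] at c5a c5b <;> revert c5a c5b <;> decide
    · exact Or.inr (Or.inl h)
    · exact Or.inr (Or.inr (h))
  have e8 : f (Pr L7) = p1302 ∨ f (Pr L7) = p2310 := by
    rcases e7 with h|h|h
    · exfalso
      rw [h] at c6 <;> rw [h21] at c6 <;> revert c6 <;> decide
    · exact Or.inl h
    · exact Or.inr (h)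
  have e9 : f (Pr L8) = p1230 ∨ f (Pr L8) = p1302 := by
    rcases h8 with h|h|h
    · exact Or.inl h
    · exact Or.inr (h)
    · exfalso
      rw [h] at c7 <;> rw [e6] at c7 <;> revert c7 <;> decide
  have e10 : f (Pr L9) = p1230 ∨ f (Pr L9) = p2310 := by
    rcases h9 with h|h|h
    · exact Or.inl h
    · exfalso
      rcases h3 with h'|h'|h' <;> rw [h] at c8 <;> rw [h'] at c8 <;> revert c8 <;> decide
    · exact Or.inr (h)
  have e11 : f (Pr L10) = p1302 ∨ f (Pr L10) = p2310 := by
    rcases h10 with h|h|h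
    · exfalso
      rcases e8 with h'|h' <;> rw [h] at c9a c9b <;> rw [h'] at c9a c9b <;> revert c9a c9b <;> decide
    · exact Or.inl h
    · exact Or.inr (h)
  have e12 : f (Pr L10) = p2310 := by
    rcases e11 with h|h
    · exfalso
      rcases e10 with h'|h' <;> rw [h] at c10a c10b <;> rw [h'] at c10a c10b <;> revert c10a c10b <;> decide
    · exact h
  have e13 : f (Pr L11) = p1230 ∨ f (Pr L11) = p1302 := by
    rcases h11 with h|h|h
    · exact Or.inl h
    · exact Or.inr (h)
    · exfalso
      rcases e9 with h'|h' <;> rw [h] at c11a c11b <;> rw [h'] at c11a c11b <;> revert c11a c11b <;> decide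
  have e14 : f (Pr L12) = p1032 ∨ f (Pr L12) = p1230 ∨ f (Pr L12) = p2031 ∨ f (Pr L12) = p3201 := by
    rcases h12 with h|h|h|h|h
    · exact Or.inl h
    · exact Or.inr (Or.inl h)
    · exfalso
      rcases h22 with h'|h'|h'|h'|h'|h' <;> rw [h] at c12 <;> rw [h'] at c12 <;> revert c12 <;> decide
    · exact Or.inr (Or.inr (Or.inl h))
    · exact Or.inr (Or.inr (Or.inr (h)))
  have e15 : f (Pr L13) = p1230 ∨ f (Pr L13) = p3201 := by
    rcases h13 with h|h|h
    · exact Or.inl h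
    · exfalso
      rcases e14 with h'|h'|h'|h' <;> rw [h] at c13a c13b <;> rw [h'] at c13a c13b <;> revert c13a c13b <;> decide
    · exact Or.inr (h)
  have e16 : f (Pr L14) = p1230 ∨ f (Pr L14) = p3201 := by
    rcases h14 with h|h|h
    · exact Or.inl h
    · exfalso
      rcases e15 with h'|h' <;> rw [h] at c14a c14b <;> rw [h'] at c14a c14b <;> revert c14a c14b <;> decide
    · exact Or.inr (h)
  have e17 : f (Pr L14) = p1230 := by
    rcases e16 with h|h
    · exact h
    · exfalso
      rcases e4 with h'|h' <;> rw [h] at c15a c15b <;> rw [h'] at c15a c15b <;> revert c15a c15b <;> decide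
  have e18 : f (Pr L15) = p1230 ∨ f (Pr L15) = p1302 ∨ f (Pr L15) = p2310 ∨ f (Pr L15) = p3201 := by
    rcases h15 with h|h|h|h|h
    · exact Or.inl h
    · exact Or.inr (Or.inl h)
    · exfalso
      rw [h] at c16 <;> rw [e17] at c16 <;> revert c16 <;> decide
    · exact Or.inr (Or.inr (Or.inl h))
    · exact Or.inr (Or.inr (Or.inr (h)))
  have e19 : f (Pr L15) = p1230 ∨ f (Pr L15) = p2310 ∨ f (Pr L15) = p3201 := by
    rcases e18 with h|h|h|h
    · exact Or.inl h
    · exfalso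
      rw [h] at c16 <;> rw [e17] at c16 <;> revert c16 <;> decide
    · exact Or.inr (Or.inl h)
    · exact Or.inr (Or.inr (h))
  have e20 : f (Pr L15) = p1230 ∨ f (Pr L15) = p2310 := by
    rcases e19 with h|h|h
    · exact Or.inl h
    · exact Or.inr (h)
    · exfalso
      rw [h] at c16 <;> rw [e17] at c16 <;> revert c16 <;> decide
  have e21 : f (Pr L16) = p1230 ∨ f (Pr L16) = p2310 := by
    rcases h16 with h|h|h
    · exact Or.inl h
    · exfalso
      rcases e20 with h'|h' <;> rw [h] at c17a c17b <;> rw [h'] at c17a c17b <;> revert c17a c17b <;> decide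
    · exact Or.inr (h)
  have e22 : f (Pr L17) = p1302 ∨ f (Pr L17) = p2310 ∨ f (Pr L17) = p3210 := by
    rcases h17 with h|h|h|h
    · exfalso
      rw [h] at c18a c18b <;> rw [e12] at c18a c18b <;> revert c18a c18b <;> decide
    · exact Or.inl h
    · exact Or.inr (Or.inl h)
    · exact Or.inr (Or.inr (h))
  have e23 : f (Pr L18) = p1230 ∨ f (Pr L18) = p1302 ∨ f (Pr L18) = p2310 := by
    rcases h18 with h|h|h|h
    · exact Or.inl h
    · exact Or.inr (Or.inl h)
    · exact Or.inr (Or.inr (h))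
    · exfalso
      rcases e13 with h'|h' <;> rw [h] at c19a c19b <;> rw [h'] at c19a c19b <;> revert c19a c19b <;> decide
  have e24 : f (Pr L18) = p1302 ∨ f (Pr L18) = p2310 := by
    rcases e23 with h|h|h
    · exfalso
      rcases e22 with h'|h'|h' <;> rw [h] at c20a c20b <;> rw [h'] at c20a c20b <;> revert c20a c20b <;> decide
    · exact Or.inl h
    · exact Or.inr (h)
  have e25 : f (Pr L18) = p2310 := by
    rcases e24 with h|h
    · exfalso
      rcases e21 with h'|h' <;> rw [h] at c21a c21b <;> rw [h'] at c21a c21b <;> revert c21a c21b <;> decide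
    · exact h
    -- final
  have h : f (Pr L18) = p2310 := e25
  rcases e13 with h'|h' <;> rw [h] at c19a c19b <;> rw [h'] at c19a c19b <;> revert c19a c19b <;> decide
end

section
/- The Backward Top Trading Cycle (BTTC) mechanism does not satisfy respecting improvement: for n = 3 (N = {1,2,3}), there exist a preference profile ≻ and an improvement ≻' for division 1 with respect to ≻ such that f^B_1(≻) ≻_1 f^B_1(≻'). In particular, for the profile ≻ given by 1 ≻_1 2 ≻_1 3, 3 ≻_2 1 ≻_2 2, 2 ≻_3 3 ≻_3 1, BTTC yields the assignment (1,3,2), while for the improved profile ≻' (identical except 1 ≻'_2 3 ≻'_2 2) BTTC yields (2,1,3), so division 1 is strictly worse off after the improvement. -/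
open scoped Classical

/-- The `r`-maximum element of the finite set `s` (chosen via Hilbert choice):
the element of `s` that `r`-beats every other element of `s`. -/
noncomputable def pick {α : Type*} [Nonempty α] (r : α → α → Prop) (s : Finset α) : α :=
  Classical.epsilon fun m => m ∈ s ∧ ∀ x ∈ s, x ≠ m → r m x

/-- Stage 1 of BTTC.  In each step, with remaining set `R`, every remaining worker
points to its initial owner and every remaining division `i` points to its most
preferred worker in `R \ {i}` (to its own worker if `|R| = 1`); hence the successor
of a division in the pointing graph is exactly the worker (= division) it points
to.  All cycles are identified and removed, recording for every division the step
`rnd` at which it was removed and the worker `pt` it was pointing to. -/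
noncomputable def bttcStage1 {α : Type*} [Fintype α] [DecidableEq α] [Nonempty α]
    (pref : α → α → α → Prop) :
    ℕ → ℕ → Finset α → (α → ℕ) → (α → α) → ((α → ℕ) × (α → α))
  | 0, _, _, rnd, pt => (rnd, pt)
  | fuel + 1, t, R, rnd, pt =>
    let point : α → α := fun i => if R.card = 1 then i else pick (pref i) (R.erase i)
    let C : Finset α := R.filter fun i => ∃ m, 0 < m ∧ m ≤ R.card ∧ point^[m] i = i
    bttcStage1 pref fuel (t + 1) (R \ C)
      (fun i => if i ∈ C then t else rnd i)
      (fun i => if i ∈ C then point i else pt i)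

/-- Stage 2 of BTTC (backward clearing).  The cycle of division `i` is its orbit
under the pointing map `pt`.  The cycle is a staying cycle iff every division `j`
in it prefers its own worker to the worker it points to, and every division of a
later step prefers its (recursively computed) assignment to every worker of the
cycle; in a staying cycle every division keeps its own worker, in a trading cycle
every division receives the worker it points to. -/
noncomputable def bttcMu {α : Type*} [Fintype α] [DecidableEq α]
    (pref : α → α → α → Prop) (rnd : α → ℕ) (pt : α → α) : ℕ → α → α
  | 0, i => pt i
  | fuel + 1, i =>
    let orbit : Finset α :=
      Finset.univ.filter fun j => ∃ m, m ≤ Fintype.card α ∧ pt^[m] i = j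
    if (∀ j ∈ orbit, pref j j (pt j)) ∧
        (∀ j : α, rnd i < rnd j → ∀ w ∈ orbit, pref j (bttcMu pref rnd pt fuel j) w)
    then i else pt i

/-- The Backward Top Trading Cycle (BTTC) mechanism. -/
noncomputable def bttc {α : Type*} [Fintype α] [DecidableEq α] [Nonempty α]
    (pref : α → α → α → Prop) : α → α :=
  let s1 := bttcStage1 pref (Fintype.card α) 0 Finset.univ (fun _ => 0) (fun a => a)
  fun i => bttcMu pref s1.1 s1.2 (Fintype.card α) i

/-- Rank tables for the counterexample profiles (division `0,1,2` stand for the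
paper's divisions `1,2,3`).  `rkA` encodes `1 ≻₁ 2 ≻₁ 3`, `3 ≻₂ 1 ≻₂ 2`,
`2 ≻₃ 3 ≻₃ 1`; `rkB` is identical except division `2`'s column becomes
`1 ≻₂ 3 ≻₂ 2`. -/
def rkA : Fin 3 → Fin 3 → ℕ := ![![0, 1, 2], ![1, 2, 0], ![2, 0, 1]]

def rkB : Fin 3 → Fin 3 → ℕ := ![![0, 1, 2], ![0, 2, 1], ![2, 0, 1]]

/-- The base profile `≻` of the counterexample. -/
def PA : Fin 3 → Fin 3 → Fin 3 → Prop := fun i x y => rkA i x < rkA i y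

/-- The improved profile `≻'` of the counterexample. -/
def PB : Fin 3 → Fin 3 → Fin 3 → Prop := fun i x y => rkB i x < rkB i y

section Helpers

lemma pick_eq {α : Type*} [Nonempty α] {r : α → α → Prop} {s : Finset α} {m : α}
    (h : m ∈ s ∧ ∀ x ∈ s, x ≠ m → r m x)
    (uniq : ∀ m', (m' ∈ s ∧ ∀ x ∈ s, x ≠ m' → r m' x) → m' = m) :
    pick r s = m :=
  uniq _ (Classical.epsilon_spec (p := fun m => m ∈ s ∧ ∀ x ∈ s, x ≠ m → r m x) ⟨m, h⟩)

lemma stage1_step {α : Type*} [Fintype α] [DecidableEq α] [Nonempty α]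
    (pref : α → α → α → Prop) (f fuel t : ℕ) (R : Finset α) (rnd : α → ℕ) (pt : α → α)
    (point' : α → α) (C' : Finset α) (hf : f = fuel + 1)
    (hp : (fun i => if R.card = 1 then i else pick (pref i) (R.erase i)) = point')
    (hC : (R.filter fun i => ∃ m, 0 < m ∧ m ≤ R.card ∧ point'^[m] i = i) = C') :
    bttcStage1 pref f t R rnd pt =
      bttcStage1 pref fuel (t + 1) (R \ C')
        (fun i => if i ∈ C' then t else rnd i)
        (fun i => if i ∈ C' then point' i else pt i) := by
  subst hf
  simp only [bttcStage1, hp, hC]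
  congr 1
  funext i
  rw [← hp]

lemma filter_id_singleton {α : Type*} [DecidableEq α] (x : α) :
    (({x} : Finset α).filter fun i =>
        ∃ m, 0 < m ∧ m ≤ ({x} : Finset α).card ∧ (fun i : α => i)^[m] i = i) = {x} := by
  apply Finset.filter_true_of_mem
  intro i _
  exact ⟨1, one_pos, by simp, Function.iterate_fixed rfl 1⟩

lemma bttcMu_trade {α : Type*} [Fintype α] [DecidableEq α]
    (pref : α → α → α → Prop) (rnd : α → ℕ) (pt : α → α) (f fuel : ℕ) (hf : f = fuel + 1)
    (i j : α) (m : ℕ) (hm : m ≤ Fintype.card α) (hmj : pt^[m] i = j)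
    (hnot : ¬ pref j j (pt j)) :
    bttcMu pref rnd pt f i = pt i := by
  subst hf
  simp only [bttcMu]
  rw [if_neg]
  rintro ⟨h1, _⟩
  exact hnot (h1 j (Finset.mem_filter.mpr ⟨Finset.mem_univ _, m, hm, hmj⟩))

end Helpers

section ProfileA

lemma pickA0 : pick (PA 0) (Finset.univ.erase (0 : Fin 3)) = 1 := by
  apply pick_eq <;> unfold PA rkA <;> decide

lemma pickA1 : pick (PA 1) (Finset.univ.erase (1 : Fin 3)) = 2 := by
  apply pick_eq <;> unfold PA rkA <;> decide

lemma pickA2 : pick (PA 2) (Finset.univ.erase (2 : Fin 3)) = 1 := by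
  apply pick_eq <;> unfold PA rkA <;> decide

lemma pointA1 : (fun i : Fin 3 => if (Finset.univ : Finset (Fin 3)).card = 1 then i
    else pick (PA i) (Finset.univ.erase i)) = ![1, 2, 1] := by
  funext i
  fin_cases i <;>
    simp [Finset.card_univ, pickA0, pickA1, pickA2]

lemma filterA1 : (Finset.univ.filter fun i => ∃ m, 0 < m ∧
    m ≤ (Finset.univ : Finset (Fin 3)).card ∧ (![1,2,1] : Fin 3 → Fin 3)^[m] i = i)
    = {1, 2} := by
  ext i
  simp only [Finset.mem_filter, Finset.mem_univ, true_and, Finset.card_univ, Fintype.card_fin]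
  fin_cases i
  · constructor
    · rintro ⟨m, h1, h2, h3⟩
      interval_cases m <;> exact absurd h3 (by decide)
    · intro h; exact absurd h (by decide)
  · exact iff_of_true ⟨2, by norm_num, by norm_num, by decide⟩ (by decide)
  · exact iff_of_true ⟨2, by norm_num, by norm_num, by decide⟩ (by decide)

lemma pointA2 : (fun i : Fin 3 => if ({0} : Finset (Fin 3)).card = 1 then i
    else pick (PA i) (({0} : Finset (Fin 3)).erase i)) = fun i => i := by
  funext i; simp

lemma stage1A : bttcStage1 PA 3 0 Finset.univ (fun _ => 0) (fun a => a)
    = (![1, 0, 0], ![0, 2, 1]) := by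
  rw [stage1_step PA 3 2 0 Finset.univ _ _ ![1,2,1] {1,2} (by norm_num) pointA1 filterA1]
  rw [show Finset.univ \ ({1,2} : Finset (Fin 3)) = {0} from by decide]
  rw [stage1_step PA 2 1 1 {0} _ _ (fun i => i) {0} (by norm_num) pointA2
    (filter_id_singleton 0)]
  rw [show ({0} : Finset (Fin 3)) \ {0} = ∅ from by decide]
  rw [stage1_step PA 1 0 2 ∅ _ _ _ ∅ (by norm_num) rfl (Finset.filter_empty _)]
  simp only [bttcStage1]
  refine Prod.ext ?_ ?_ <;> funext i <;> fin_cases i <;>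
    simp only [Finset.notMem_empty, if_false] <;> decide

end ProfileA

section ProfileB

lemma pickB0 : pick (PB 0) (Finset.univ.erase (0 : Fin 3)) = 1 := by
  apply pick_eq <;> unfold PB rkB <;> decide

lemma pickB1 : pick (PB 1) (Finset.univ.erase (1 : Fin 3)) = 0 := by
  apply pick_eq <;> unfold PB rkB <;> decide

lemma pickB2 : pick (PB 2) (Finset.univ.erase (2 : Fin 3)) = 1 := by
  apply pick_eq <;> unfold PB rkB <;> decide

lemma pointB1 : (fun i : Fin 3 => if (Finset.univ : Finset (Fin 3)).card = 1 then i
    else pick (PB i) (Finset.univ.erase i)) = ![1, 0, 1] := by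
  funext i
  fin_cases i <;>
    simp [Finset.card_univ, pickB0, pickB1, pickB2]

lemma filterB1 : (Finset.univ.filter fun i => ∃ m, 0 < m ∧
    m ≤ (Finset.univ : Finset (Fin 3)).card ∧ (![1,0,1] : Fin 3 → Fin 3)^[m] i = i)
    = {0, 1} := by
  ext i
  simp only [Finset.mem_filter, Finset.mem_univ, true_and, Finset.card_univ, Fintype.card_fin]
  fin_cases i
  · exact iff_of_true ⟨2, by norm_num, by norm_num, by decide⟩ (by decide)
  · exact iff_of_true ⟨2, by norm_num, by norm_num, by decide⟩ (by decide)
  · constructor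
    · rintro ⟨m, h1, h2, h3⟩
      interval_cases m <;> exact absurd h3 (by decide)
    · intro h; exact absurd h (by decide)

lemma pointB2 : (fun i : Fin 3 => if ({2} : Finset (Fin 3)).card = 1 then i
    else pick (PB i) (({2} : Finset (Fin 3)).erase i)) = fun i => i := by
  funext i; simp

lemma stage1B : bttcStage1 PB 3 0 Finset.univ (fun _ => 0) (fun a => a)
    = (![0, 0, 1], ![1, 0, 2]) := by
  rw [stage1_step PB 3 2 0 Finset.univ _ _ ![1,0,1] {0,1} (by norm_num) pointB1 filterB1]
  rw [show Finset.univ \ ({0,1} : Finset (Fin 3)) = {2} from by decide]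
  rw [stage1_step PB 2 1 1 {2} _ _ (fun i => i) {2} (by norm_num) pointB2
    (filter_id_singleton 2)]
  rw [show ({2} : Finset (Fin 3)) \ {2} = ∅ from by decide]
  rw [stage1_step PB 1 0 2 ∅ _ _ _ ∅ (by norm_num) rfl (Finset.filter_empty _)]
  simp only [bttcStage1]
  refine Prod.ext ?_ ?_ <;> funext i <;> fin_cases i <;>
    simp only [Finset.notMem_empty, if_false] <;> decide

end ProfileB

lemma bttcA : ∀ i, bttc PA i = (![0, 2, 1] : Fin 3 → Fin 3) i := by
  intro i
  show bttcMu PA (bttcStage1 PA (Fintype.card (Fin 3)) 0 Finset.univ (fun _ => 0) (fun a => a)).1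
      (bttcStage1 PA (Fintype.card (Fin 3)) 0 Finset.univ (fun _ => 0) (fun a => a)).2
      (Fintype.card (Fin 3)) i = _
  rw [show Fintype.card (Fin 3) = 3 from rfl, stage1A]
  fin_cases i
  · exact bttcMu_trade PA _ _ 3 2 rfl 0 0 0 (by norm_num) (by decide) (by unfold PA rkA; decide)
  · exact bttcMu_trade PA _ _ 3 2 rfl 1 1 0 (by norm_num) (by decide) (by unfold PA rkA; decide)
  · exact bttcMu_trade PA _ _ 3 2 rfl 2 2 0 (by norm_num) (by decide) (by unfold PA rkA; decide)

lemma bttcB : ∀ i, bttc PB i = (![1, 0, 2] : Fin 3 → Fin 3) i := by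
  intro i
  show bttcMu PB (bttcStage1 PB (Fintype.card (Fin 3)) 0 Finset.univ (fun _ => 0) (fun a => a)).1
      (bttcStage1 PB (Fintype.card (Fin 3)) 0 Finset.univ (fun _ => 0) (fun a => a)).2
      (Fintype.card (Fin 3)) i = _
  rw [show Fintype.card (Fin 3) = 3 from rfl, stage1B]
  fin_cases i
  · exact bttcMu_trade PB _ _ 3 2 rfl 0 1 1 (by norm_num) (by decide) (by unfold PB rkB; decide)
  · exact bttcMu_trade PB _ _ 3 2 rfl 1 1 0 (by norm_num) (by decide) (by unfold PB rkB; decide)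
  · exact bttcMu_trade PB _ _ 3 2 rfl 2 2 0 (by norm_num) (by decide) (by unfold PB rkB; decide)

lemma strictA : StrictProfile PA := by
  have tri : ∀ i a b : Fin 3, PA i a b ∨ a = b ∨ PA i b a := by unfold PA rkA; decide
  have irr : ∀ i a : Fin 3, ¬ PA i a a := by unfold PA rkA; decide
  have tr : ∀ i a b c : Fin 3, PA i a b → PA i b c → PA i a c := by unfold PA rkA; decide
  exact fun i => { trichotomous := fun a b h1 h2 => ((tri i a b).resolve_left h1).resolve_right h2, irrefl := irr i, trans := tr i }

lemma strictB : StrictProfile PB := by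
  have tri : ∀ i a b : Fin 3, PB i a b ∨ a = b ∨ PB i b a := by unfold PB rkB; decide
  have irr : ∀ i a : Fin 3, ¬ PB i a a := by unfold PB rkB; decide
  have tr : ∀ i a b c : Fin 3, PB i a b → PB i b c → PB i a c := by unfold PB rkB; decide
  exact fun i => { trichotomous := fun a b h1 h2 => ((tri i a b).resolve_left h1).resolve_right h2, irrefl := irr i, trans := tr i }

lemma improveAB : Improvement PA PB 0 := by
  refine ⟨rfl, ?_, ?_⟩ <;> unfold PA PB rkA rkB <;> decide

/-- BTTC does not respect improvement: for `n = 3` there are a profile and an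
improvement for division `1` (index `0`) after which division `1` is strictly worse
off; in particular, on the displayed profiles BTTC yields `(1,3,2)` before and
`(2,1,3)` after the improvement. -/
theorem bttc_fails_RI :
    (∃ (pref pref' : Fin 3 → Fin 3 → Fin 3 → Prop) (i : Fin 3),
        StrictProfile pref ∧ StrictProfile pref' ∧ Improvement pref pref' i ∧
        pref i (bttc pref i) (bttc pref' i)) ∧
    Improvement PA PB 0 ∧
    bttc PA 0 = 0 ∧ bttc PA 1 = 2 ∧ bttc PA 2 = 1 ∧
    bttc PB 0 = 1 ∧ bttc PB 1 = 0 ∧ bttc PB 2 = 2 ∧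
    PA 0 (bttc PA 0) (bttc PB 0) := by
  refine ⟨⟨PA, PB, 0, strictA, strictB, improveAB, ?_⟩, improveAB,
    by simpa using bttcA 0, by simpa using bttcA 1, by simpa using bttcA 2,
    by simpa using bttcB 0, by simpa using bttcB 1, by simpa using bttcB 2, ?_⟩ <;>
  · rw [bttcA 0, bttcB 0]
    unfold PA rkA
    decide
end
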